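/- arXiv:2110.12966 — 2 statements merged into one kernel-verified Lean document; each statement's English description precedes it below -/
import Mathlib

section
/- Let p ≥ 1 and let s be a natural number with 1 ≤ s < p. For θ ∈ ℝ^p let P_{θ,1} := N(θ, 1_p 1_pᵀ) (the equicorrelated Gaussian model with correlation γ = 1). Then for every ε > 0 the minimax testing risk R(ε) := inf_φ { P_{0,1}(φ = 1) + sup_{θ ∈ Θ(p,s,ε)} P_{θ,1}(φ = 0) } equals 0, where the infimum runs over measurable φ : ℝ^p → {0,1} and Θ(p,s,ε) := {θ ∈ ℝ^p : ‖θ‖ ≥ ε and ‖θ‖₀ ≤ s}. Moreover the test φ*(x) := 1{x − x̄ 1_p ≠ 0}, with x̄ := p^{-1} Σ_{i=1}^p x_i, has P_{0,1}(φ* = 1) = 0 and sup_{θ ∈ Θ(p,s,ε)} P_{θ,1}(φ* = 0) = 0. -/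
/-!
Since `(1 1ᵀ / √p)² = 1 1ᵀ`, a sample of `N(θ, 1 1ᵀ)` is `θ + (1 1ᵀ / √p) z = θ + Z 1_p` for a
standard Gaussian `z`, with the single scalar `Z = (∑ zⱼ) / √p`. Demeaning kills `Z 1_p`, so
`x - x̄ 1_p = θ - θ̄ 1_p` surely: its law is a point mass. It vanishes at `θ = 0`, while a `θ ≠ 0`
with `θ - θ̄ 1_p = 0` is a nonzero constant vector, of sparsity `p > s`. So the test `φ*` never
errs and the minimax risk is `0`.
-/

open MeasureTheory ProbabilityTheory Matrix Finset
open scoped Classical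

noncomputable section

/-- The standard Gaussian measure on `Fin p → ℝ`. -/
def stdGaussianPi (p : ℕ) : Measure (Fin p → ℝ) :=
  Measure.pi fun _ => gaussianReal 0 1

/-- The Gaussian measure `N(θ, S)` on `ℝ^p` with mean `θ` and positive semidefinite
covariance matrix `S`, realized as the pushforward of the standard Gaussian under
`x ↦ θ + √S x` (junk value `0` if `S` is not positive semidefinite). -/
def gaussianPi {p : ℕ} (θ : Fin p → ℝ) (S : Matrix (Fin p) (Fin p) ℝ) :
    Measure (Fin p → ℝ) :=
  if h : S.PosSemidef then (stdGaussianPi p).map (fun x => θ + ((h.1.eigenvectorUnitary : Matrix (Fin p) (Fin p) ℝ) *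
      diagonal (fun i => Real.sqrt (h.1.eigenvalues i)) *
      (star h.1.eigenvectorUnitary : Matrix (Fin p) (Fin p) ℝ)).mulVec x) else 0

/-- `‖θ‖₀`, the number of nonzero coordinates. -/
def sparsity {p : ℕ} (θ : Fin p → ℝ) : ℕ := Set.ncard {i | θ i ≠ 0}

/-- The Euclidean norm on `Fin p → ℝ`. -/
def l2norm {p : ℕ} (θ : Fin p → ℝ) : ℝ := Real.sqrt (∑ i, θ i ^ 2)

/-- Minimax testing risk: infimum over measurable tests `φ : ℝ^p → {0,1}` of the
type I error under `P 0` plus the worst-case type II error over the alternative `T`. -/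
def minimaxRisk {p : ℕ} (P : (Fin p → ℝ) → Measure (Fin p → ℝ))
    (T : Set (Fin p → ℝ)) : ℝ :=
  ⨅ φ : {f : (Fin p → ℝ) → Bool // Measurable f},
    ((P 0 {x | φ.1 x = true}).toReal + ⨆ θ ∈ T, (P θ {x | φ.1 x = false}).toReal)


open scoped MatrixOrder in
theorem Matrix.PosSemidef.spectral_sqrt_eq_of_mul_self_eq {n : Type*} [Fintype n]
    [DecidableEq n] {S B : Matrix n n ℝ} (hS : S.PosSemidef) (hB : B.PosSemidef)
    (hBS : B * B = S) :
    (hS.1.eigenvectorUnitary : Matrix n n ℝ) * diagonal (fun i => √(hS.1.eigenvalues i)) *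
      (star hS.1.eigenvectorUnitary : Matrix n n ℝ) = B := by
  rw [← CFC.sqrt_unique hBS hB.nonneg, CFC.sqrt_eq_cfc, cfc_nnreal_eq_real _ _ hS.nonneg,
    hS.1.cfc_eq]
  have hmax : ∀ i, max (hS.1.eigenvalues i) 0 = hS.1.eigenvalues i :=
    fun i => max_eq_left (hS.eigenvalues_nonneg i)
  simp [IsHermitian.cfc, Function.comp_def, hmax]

instance isProbabilityMeasure_stdGaussianPi (p : ℕ) : IsProbabilityMeasure (stdGaussianPi p) := by
  unfold stdGaussianPi; infer_instance

theorem gaussianPi_eq_map_of_mul_self_eq {p : ℕ} (θ : Fin p → ℝ)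
    {S B : Matrix (Fin p) (Fin p) ℝ} (hS : S.PosSemidef) (hB : B.PosSemidef)
    (hBS : B * B = S) :
    gaussianPi θ S = (stdGaussianPi p).map (fun x => θ + B *ᵥ x) := by
  rw [gaussianPi, dif_pos hS, hS.spectral_sqrt_eq_of_mul_self_eq hB hBS]

theorem allOnes_eq_vecMulVec (n : Type*) :
    (of fun _ _ => (1 : ℝ) : Matrix n n ℝ) = vecMulVec 1 1 := by
  ext; simp [vecMulVec_apply]

theorem gaussianPi_allOnes {p : ℕ} (θ : Fin p → ℝ) :
    gaussianPi θ (of fun _ _ => (1 : ℝ)) =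
      (stdGaussianPi p).map (fun x => θ + fun _ => (√p)⁻¹ * ∑ j, x j) := by
  have hJ := allOnes_eq_vecMulVec (Fin p)
  have hB : ((√p)⁻¹ • vecMulVec 1 1 : Matrix (Fin p) (Fin p) ℝ).PosSemidef := by
    simpa using
      (posSemidef_vecMulVec_self_star (1 : Fin p → ℝ)).smul (by positivity : 0 ≤ (√p)⁻¹)
  rw [gaussianPi_eq_map_of_mul_self_eq θ (hJ ▸ posSemidef_vecMulVec_self_star 1) hB]
  · congr 1
    ext x i
    simp only [smul_mulVec, vecMulVec_mulVec, one_dotProduct]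
    simp [mul_comm]
  · -- `(1 1ᵀ / √p)² = 1 1ᵀ` because `1ᵀ 1 = p`
    rw [smul_mul_smul_comm, vecMulVec_mul_vecMulVec, hJ]
    ext i j
    have hp : (p : ℝ) ≠ 0 := by exact_mod_cast (Fin.pos i).ne'
    simp [vecMulVec_apply, ← mul_inv, Real.mul_self_sqrt, hp]

/-- `x - x̄ 1_p`, the component of `x` orthogonal to `1_p`. -/
def demean {p : ℕ} (x : Fin p → ℝ) : Fin p → ℝ := fun i => x i - (∑ j, x j) / p

@[simp]
theorem demean_zero (p : ℕ) : demean (0 : Fin p → ℝ) = 0 := by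
  ext; simp [demean]

theorem measurable_demean (p : ℕ) : Measurable (demean (p := p)) := by
  unfold demean; fun_prop

theorem demean_add_const {p : ℕ} (x : Fin p → ℝ) (c : ℝ) :
    demean (x + fun _ => c) = demean x := by
  ext i
  have hp : (p : ℝ) ≠ 0 := by exact_mod_cast (Fin.pos i).ne'
  simp only [demean, Pi.add_apply, sum_add_distrib, sum_const, card_univ, Fintype.card_fin,
    nsmul_eq_mul]
  field_simp
  ring

theorem demean_eq_zero_iff {p : ℕ} {x : Fin p → ℝ} :
    demean x = 0 ↔ ∀ i j, x i = x j := by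
  constructor
  · intro h i j
    have hi := congrFun h i
    have hj := congrFun h j
    simp only [demean, Pi.zero_apply, sub_eq_zero] at hi hj
    rw [hi, hj]
  · intro h
    ext i
    have hp : (p : ℝ) ≠ 0 := by exact_mod_cast (Fin.pos i).ne'
    simp [demean, fun j => h j i, hp]

theorem demean_ne_zero_of_sparsity_lt {p : ℕ} {θ : Fin p → ℝ} (h0 : θ ≠ 0)
    (hs : sparsity θ < p) : demean θ ≠ 0 := by
  intro h
  obtain ⟨i, hi⟩ := Function.ne_iff.mp h0
  have hsupp : {j | θ j ≠ 0} = Set.univ :=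
    Set.eq_univ_of_forall fun j => by simpa [demean_eq_zero_iff.mp h j i] using hi
  simp [sparsity, hsupp] at hs

theorem map_demean_gaussianPi_allOnes {p : ℕ} (θ : Fin p → ℝ) :
    (gaussianPi θ (of fun _ _ => (1 : ℝ))).map demean = Measure.dirac (demean θ) := by
  rw [gaussianPi_allOnes, Measure.map_map (measurable_demean p) (by fun_prop)]
  simp only [Function.comp_def, demean_add_const]
  simp

theorem biSup_toReal_eq_zero {α : Type*} {T : Set α} {f : α → ENNReal}
    (hf : ∀ a ∈ T, f a = 0) : ⨆ a ∈ T, (f a).toReal = 0 := by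
  have h : ∀ a, ⨆ _ : a ∈ T, (f a).toReal = 0 := fun a =>
    (iSup_congr fun ha => by rw [hf a ha, ENNReal.toReal_zero]).trans Real.iSup_const_zero
  simp only [h, Real.iSup_const_zero]

theorem minimaxRisk_eq_zero_of_measurableSet {p : ℕ} {P : (Fin p → ℝ) → Measure (Fin p → ℝ)}
    {T : Set (Fin p → ℝ)} {A : Set (Fin p → ℝ)} (hA : MeasurableSet A) (hI : P 0 Aᶜ = 0)
    (hII : ∀ θ ∈ T, P θ A = 0) :
    minimaxRisk P T = 0 := by
  have hφ : Measurable fun x => decide (x ∉ A) :=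
    measurable_to_bool (by convert hA.compl; ext; simp)
  have : Nonempty {f : (Fin p → ℝ) → Bool // Measurable f} := ⟨⟨_, hφ⟩⟩
  have hrisk_nonneg : ∀ ψ : {f : (Fin p → ℝ) → Bool // Measurable f},
      0 ≤ (P 0 {x | ψ.1 x = true}).toReal + ⨆ θ ∈ T, (P θ {x | ψ.1 x = false}).toReal :=
    fun ψ => add_nonneg ENNReal.toReal_nonneg
      (Real.iSup_nonneg fun _ => Real.iSup_nonneg fun _ => ENNReal.toReal_nonneg)
  refine le_antisymm ?_ (le_ciInf hrisk_nonneg)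
  refine ciInf_le_of_le ⟨0, Set.forall_mem_range.mpr hrisk_nonneg⟩ ⟨_, hφ⟩ ?_
  simp [← Set.compl_def, hI, biSup_toReal_eq_zero hII]

theorem perfect_correlation_sparse_case_general
    (p s : ℕ) (hs2 : s < p) (ε : ℝ) (hε : 0 < ε) :
    (let P : (Fin p → ℝ) → Measure (Fin p → ℝ) := fun θ =>
      gaussianPi θ (Matrix.of fun _ _ => (1 : ℝ))
    let Θ : Set (Fin p → ℝ) := {θ | ε ≤ l2norm θ ∧ sparsity θ ≤ s}
    minimaxRisk P Θ = 0 ∧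
      (P 0 {x | (fun i => x i - (∑ j, x j) / p) ≠ 0}).toReal = 0 ∧
      (⨆ θ ∈ Θ, (P θ {x | (fun i => x i - (∑ j, x j) / p) = 0}).toReal) = 0) := by
  intro P Θ
  have hP : ∀ θ E, MeasurableSet E → P θ (demean ⁻¹' E) = Measure.dirac (demean θ) E :=
    fun θ E hE => by
      rw [← map_demean_gaussianPi_allOnes, Measure.map_apply (measurable_demean p) hE]
  have hI : P 0 (demean ⁻¹' {0})ᶜ = 0 := by
    rw [← Set.preimage_compl, hP 0 _ (measurableSet_singleton 0).compl]
    simp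
  have hII : ∀ θ ∈ Θ, P θ (demean ⁻¹' {0}) = 0 := by
    rintro θ ⟨hnorm, hsparse⟩
    have hθ : θ ≠ 0 := by
      rintro rfl
      simp [l2norm] at hnorm
      linarith
    rw [hP θ _ (measurableSet_singleton 0)]
    simp [demean_ne_zero_of_sparsity_lt hθ (hsparse.trans_lt hs2)]
  exact ⟨minimaxRisk_eq_zero_of_measurableSet
    ((measurableSet_singleton 0).preimage (measurable_demean p)) hI hII,
    (congrArg ENNReal.toReal hI).trans ENNReal.toReal_zero,
    biSup_toReal_eq_zero hII⟩

theorem perfect_correlation_sparse_case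
    (p s : ℕ) (hp : 1 ≤ p) (hs1 : 1 ≤ s) (hs2 : s < p) (ε : ℝ) (hε : 0 < ε) :
    (let P : (Fin p → ℝ) → Measure (Fin p → ℝ) := fun θ =>
      gaussianPi θ (Matrix.of fun _ _ => (1 : ℝ))
    let Θ : Set (Fin p → ℝ) := {θ | ε ≤ l2norm θ ∧ sparsity θ ≤ s}
    minimaxRisk P Θ = 0 ∧
      (P 0 {x | (fun i => x i - (∑ j, x j) / p) ≠ 0}).toReal = 0 ∧
      (⨆ θ ∈ Θ, (P θ {x | (fun i => x i - (∑ j, x j) / p) = 0}).toReal) = 0) :=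
  perfect_correlation_sparse_case_general p s hs2 ε hε

end
end

section
/- Let p ≥ 1, let v ∈ ℝ^p with ‖v‖ = √p, and for θ ∈ ℝ^p let P_{θ,1,v} := N(θ, v vᵀ) (the rank-one correlation model with γ = 1). Let 1 ≤ s ≤ p and define R(ε) := inf_φ { P_{0,1,v}(φ = 1) + sup_{θ ∈ Θ(p,s,ε)} P_{θ,1,v}(φ = 0) } over measurable φ : ℝ^p → {0,1}, where Θ(p,s,ε) := {θ ∈ ℝ^p : ‖θ‖ ≥ ε and ‖θ‖₀ ≤ s}. Then: (a) if s < ‖v‖₀ then R(ε) = 0 for every ε > 0; and (b) if s ≥ ‖v‖₀ then for every η ∈ (0,1) there exist constants C_η > 0 and c_η > 0 depending only on η such that R(C√p) ≤ η for all C > C_η and R(c√p) ≥ 1 − η for all 0 < c < c_η. -/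
open MeasureTheory ProbabilityTheory Matrix Finset
open scoped Classical

noncomputable section

/-! Since `v vᵀ` has rank one, `N(θ, v vᵀ)` is the law of `θ + Z v` with `Z ~ N(0,1)`, so every
observation lies on the line `θ + ℝ v`. If `s < ‖v‖₀`, no alternative lies on `ℝ v` while the null
does, and the test "reject unless `x ∈ ℝ v`" never errs. If `s ≥ ‖v‖₀`, the test accepting exactly
on the segment `[-C/2, C/2] v` errs only if `|Z| ≥ C/2`: under an alternative `θ` with
`‖θ‖ ≥ C ‖v‖`, landing in the segment forces `θ = a v` with `|a| ≥ C`. Conversely `c v` is itself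
an alternative, and on the line the two hypotheses become `N(0,1)` and `N(c,1)`, whose total
variation distance is at most `c`. -/

open scoped NNReal ENNReal MatrixOrder

lemma gaussianPDF_le_gaussianPDF {μ ν x : ℝ} (v : ℝ≥0) (h : |x - ν| ≤ |x - μ|) :
    gaussianPDF μ v x ≤ gaussianPDF ν v x := by
  have hsq : (x - ν) ^ 2 ≤ (x - μ) ^ 2 := sq_le_sq.2 h
  refine ENNReal.ofReal_le_ofReal ?_
  rw [gaussianPDFReal_def, gaussianPDFReal_def]
  exact mul_le_mul_of_nonneg_left (Real.exp_le_exp.2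
    (div_le_div_of_nonneg_right (neg_le_neg hsq) (by positivity))) (by positivity)

lemma gaussianPDF_one_le_one (μ x : ℝ) : gaussianPDF μ 1 x ≤ 1 := by
  refine ENNReal.ofReal_le_one.2 ?_
  simp only [gaussianPDFReal_def, NNReal.coe_one, mul_one]
  have h2pi : 1 ≤ Real.sqrt (2 * Real.pi) :=
    Real.one_le_sqrt.2 (by nlinarith [Real.pi_gt_three])
  have hexp : Real.exp (-(x - μ) ^ 2 / 2) ≤ 1 :=
    Real.exp_le_one_iff.2 (div_nonpos_of_nonpos_of_nonneg (neg_nonpos.2 (sq_nonneg _)) zero_le_two)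
  calc (Real.sqrt (2 * Real.pi))⁻¹ * Real.exp (-(x - μ) ^ 2 / 2) ≤ 1 * 1 := by
        gcongr
        exact inv_le_one_of_one_le₀ h2pi
    _ = 1 := one_mul 1

lemma gaussianReal_one_le_volume (μ : ℝ) : gaussianReal μ 1 ≤ volume := by
  rw [gaussianReal_of_var_ne_zero μ one_ne_zero]
  calc volume.withDensity (gaussianPDF μ 1) ≤ volume.withDensity 1 :=
        withDensity_mono (ae_of_all _ (gaussianPDF_one_le_one μ))
    _ = volume := withDensity_one

/-- The excess of the density of `N(0,1)` over that of `N(t,1)` lives on `(-∞, t/2)`, where it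
integrates to `N(0,1)[-t/2, t/2) ≤ t`. -/
lemma gaussianReal_le_gaussianReal_add {t : ℝ} (ht : 0 ≤ t) (B : Set ℝ) :
    gaussianReal 0 1 B ≤ gaussianReal t 1 B + ENNReal.ofReal t := by
  set f₀ := gaussianPDF 0 1
  set fₜ := gaussianPDF t 1
  set H := Set.Iio (t / 2)
  have hshift : gaussianReal t 1 H = gaussianReal 0 1 (Set.Iio (-(t / 2))) := by
    rw [← zero_add t, ← gaussianReal_map_add_const, Measure.map_apply (measurable_add_const _)
      measurableSet_Iio, Set.preimage_add_const_Iio]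
    ring_nf
  have hstrip :
      gaussianReal 0 1 H ≤ gaussianReal 0 1 (Set.Iio (-(t / 2))) + ENNReal.ofReal t := by
    calc gaussianReal 0 1 H
        = gaussianReal 0 1 (Set.Iio (-(t / 2)) ∪ Set.Ico (-(t / 2)) (t / 2)) := by
          rw [Set.Iio_union_Ico_eq_Iio (by linarith)]
      _ ≤ gaussianReal 0 1 (Set.Iio (-(t / 2))) + volume (Set.Ico (-(t / 2)) (t / 2)) :=
          (measure_union_le _ _).trans (by gcongr; exact gaussianReal_one_le_volume 0)
      _ = gaussianReal 0 1 (Set.Iio (-(t / 2))) + ENNReal.ofReal t := by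
          rw [Real.volume_Ico]; ring_nf
  have hexcess : ∫⁻ x, (f₀ x - fₜ x) ≤ ENNReal.ofReal t := by
    have hsupp : Function.support (fun x => f₀ x - fₜ x) ⊆ H := by
      intro x hx
      by_contra hxH
      have : t / 2 ≤ x := not_lt.1 hxH
      exact hx (tsub_eq_zero_of_le (gaussianPDF_le_gaussianPDF 1 (sq_le_sq.1 (by nlinarith))))
    rw [← setLIntegral_eq_of_support_subset hsupp, lintegral_sub (measurable_gaussianPDF t 1)]
    · rw [← gaussianReal_apply _ one_ne_zero, ← gaussianReal_apply _ one_ne_zero, hshift,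
        tsub_le_iff_left]
      exact hstrip
    · rw [← gaussianReal_apply _ one_ne_zero]
      exact measure_ne_top _ _
    · filter_upwards [ae_restrict_mem measurableSet_Iio] with x (hx : x < t / 2)
      exact gaussianPDF_le_gaussianPDF 1 (sq_le_sq.1 (by nlinarith))
  calc gaussianReal 0 1 B = ∫⁻ x in B, f₀ x := gaussianReal_apply _ one_ne_zero _
    _ ≤ ∫⁻ x in B, (fₜ x + (f₀ x - fₜ x)) := lintegral_mono fun x => le_add_tsub
    _ = (∫⁻ x in B, fₜ x) + ∫⁻ x in B, (f₀ x - fₜ x) :=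
        lintegral_add_right _ ((measurable_gaussianPDF 0 1).sub (measurable_gaussianPDF t 1))
    _ ≤ gaussianReal t 1 B + ∫⁻ x, (f₀ x - fₜ x) := by
        rw [gaussianReal_apply _ one_ne_zero]
        exact add_le_add le_rfl (setLIntegral_le_lintegral _ _)
    _ ≤ gaussianReal t 1 B + ENNReal.ofReal t := by gcongr

lemma exists_measure_abs_gt_le (μ : Measure ℝ) [IsFiniteMeasure μ] {δ : ℝ≥0∞} (hδ : 0 < δ) :
    ∃ M : ℝ, μ {t | M < |t|} ≤ δ := by
  have h := tendsto_measure_norm_gt_of_isTightMeasureSet (isTightMeasureSet_singleton (μ := μ))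
  simp only [Set.mem_singleton_iff, iSup_iSup_eq_left, Real.norm_eq_abs] at h
  exact (h.eventually (gt_mem_nhds hδ)).exists.imp fun _ => le_of_lt

lemma Matrix.PosSemidef.eigen_sqrt_eq_cfcSqrt {n : Type*} [Fintype n] [DecidableEq n]
    {S : Matrix n n ℝ} (h : S.PosSemidef) :
    (h.1.eigenvectorUnitary : Matrix n n ℝ) * diagonal (fun i => Real.sqrt (h.1.eigenvalues i)) *
      (star h.1.eigenvectorUnitary : Matrix n n ℝ) = CFC.sqrt S := by
  rw [CFC.sqrt_eq_real_sqrt S h.nonneg, cfcₙ_eq_cfc, h.1.cfc_eq, IsHermitian.cfc,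
    Unitary.conjStarAlgAut_apply]
  rfl

lemma cfcSqrt_vecMulVec_self {n : Type*} [Fintype n] [DecidableEq n] (v : n → ℝ) :
    CFC.sqrt (vecMulVec v v) = (Real.sqrt (v ⬝ᵥ v))⁻¹ • vecMulVec v v := by
  have hvv : 0 ≤ v ⬝ᵥ v := dotProduct_star_self_nonneg v
  have hpsd : (vecMulVec v v).PosSemidef := by simpa using posSemidef_vecMulVec_self_star v
  refine CFC.sqrt_unique ?_ (nonneg_iff_posSemidef.2 (hpsd.smul (by positivity)))
  rcases hvv.eq_or_lt with h0 | hpos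
  · simp [dotProduct_self_eq_zero.1 h0.symm]
  · rw [smul_mul_smul, vecMulVec_mul_vecMulVec, vecMulVec_smul, smul_smul,
      ← mul_inv, Real.mul_self_sqrt hvv, inv_mul_cancel₀ hpos.ne', one_smul]

lemma stdGaussianPi_map_dotProduct {p : ℕ} (u : Fin p → ℝ) :
    (stdGaussianPi p).map (fun x => u ⬝ᵥ x) = gaussianReal 0 (u ⬝ᵥ u).toNNReal := by
  have hstd : (stdGaussianPi p).map (WithLp.toLp 2) = stdGaussian (EuclideanSpace ℝ (Fin p)) :=
    map_pi_eq_stdGaussian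
  have hinner : (fun x : Fin p → ℝ => u ⬝ᵥ x) = innerSL ℝ (WithLp.toLp 2 u) ∘ WithLp.toLp 2 := by
    ext x
    simp [dotProduct, EuclideanSpace.inner_eq_star_dotProduct, mul_comm]
  rw [hinner, ← Measure.map_map (by fun_prop) (by fun_prop), hstd,
    IsGaussian.map_eq_gaussianReal, integral_strongDual_stdGaussian, variance_dual_stdGaussian,
    innerSL_apply_norm, EuclideanSpace.real_norm_sq_eq]
  simp [dotProduct, sq]

lemma gaussianPi_eq_map_cfcSqrt {p : ℕ} (θ : Fin p → ℝ) {S : Matrix (Fin p) (Fin p) ℝ}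
    (hS : S.PosSemidef) :
    gaussianPi θ S = (stdGaussianPi p).map (fun x => θ + CFC.sqrt S *ᵥ x) := by
  rw [gaussianPi, dif_pos hS, hS.eigen_sqrt_eq_cfcSqrt]

lemma gaussianPi_vecMulVec_self {p : ℕ} (θ : Fin p → ℝ) {v : Fin p → ℝ} (hv : v ≠ 0) :
    gaussianPi θ (vecMulVec v v) = (gaussianReal 0 1).map (fun t => θ + t • v) := by
  set u := (Real.sqrt (v ⬝ᵥ v))⁻¹ • v
  have hvv : 0 < v ⬝ᵥ v := by simpa using dotProduct_star_self_pos_iff.2 hv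
  have huu : u ⬝ᵥ u = 1 := by
    simp only [u, smul_dotProduct, dotProduct_smul, smul_eq_mul, ← mul_assoc, ← mul_inv,
      Real.mul_self_sqrt hvv.le, inv_mul_cancel₀ hvv.ne']
  have hsqrt : (fun x => θ + CFC.sqrt (vecMulVec v v) *ᵥ x)
      = (fun t => θ + t • v) ∘ (fun x => u ⬝ᵥ x) := by
    ext x i
    simp [u, cfcSqrt_vecMulVec_self, smul_mulVec, vecMulVec_mulVec, mul_assoc]
  rw [gaussianPi_eq_map_cfcSqrt θ (by simpa using posSemidef_vecMulVec_self_star v), hsqrt,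
    ← Measure.map_map (by fun_prop) (by fun_prop), stdGaussianPi_map_dotProduct, huu,
    Real.toNNReal_one]

lemma l2norm_eq_norm {p : ℕ} (θ : Fin p → ℝ) : l2norm θ = ‖WithLp.toLp 2 θ‖ := by
  simp [l2norm, EuclideanSpace.norm_eq]

lemma l2norm_smul {p : ℕ} (c : ℝ) (θ : Fin p → ℝ) : l2norm (c • θ) = |c| * l2norm θ := by
  simp [l2norm_eq_norm, norm_smul]

lemma sparsity_smul {p : ℕ} {c : ℝ} (hc : c ≠ 0) (θ : Fin p → ℝ) :
    sparsity (c • θ) = sparsity θ := by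
  simp [sparsity, hc]

section minimaxRisk

variable {p : ℕ} {P : (Fin p → ℝ) → Measure (Fin p → ℝ)} {T : Set (Fin p → ℝ)}

lemma risk_nonneg (φ : (Fin p → ℝ) → Bool) :
    0 ≤ (P 0 {x | φ x = true}).toReal + ⨆ θ ∈ T, (P θ {x | φ x = false}).toReal :=
  add_nonneg ENNReal.toReal_nonneg
    (Real.iSup_nonneg fun _ => Real.iSup_nonneg fun _ => ENNReal.toReal_nonneg)

lemma minimaxRisk_nonneg : 0 ≤ minimaxRisk P T :=
  Real.iInf_nonneg fun φ => risk_nonneg φ.1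

lemma minimaxRisk_le_of_acceptanceRegion {K : Set (Fin p → ℝ)} (hK : MeasurableSet K)
    {α β : ℝ} (hβ : 0 ≤ β) (hI : (P 0 Kᶜ).toReal ≤ α) (hII : ∀ θ ∈ T, (P θ K).toReal ≤ β) :
    minimaxRisk P T ≤ α + β := by
  let φ : (Fin p → ℝ) → Bool := fun x => decide (x ∉ K)
  have hφ : Measurable φ := measurable_to_bool (by convert hK.compl; ext; simp [φ])
  have hbdd : BddBelow (Set.range fun ψ : {f : (Fin p → ℝ) → Bool // Measurable f} =>
      (P 0 {x | ψ.1 x = true}).toReal + ⨆ θ ∈ T, (P θ {x | ψ.1 x = false}).toReal) :=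
    ⟨0, Set.forall_mem_range.2 fun ψ => risk_nonneg ψ.1⟩
  refine (ciInf_le hbdd ⟨φ, hφ⟩).trans (add_le_add ?_ ?_)
  · have hφtrue : {x | φ x = true} = Kᶜ := by ext; simp [φ]
    change (P 0 {x | φ x = true}).toReal ≤ α
    rwa [hφtrue]
  · exact Real.iSup_le (fun θ => Real.iSup_le (fun hθ => by simpa [φ] using hII θ hθ) hβ) hβ

lemma le_minimaxRisk (hP : ∀ θ, IsProbabilityMeasure (P θ)) {r : ℝ}
    (h : ∀ K, MeasurableSet K → ∃ θ ∈ T, r ≤ (P 0 Kᶜ).toReal + (P θ K).toReal) :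
    r ≤ minimaxRisk P T := by
  have : Nonempty {f : (Fin p → ℝ) → Bool // Measurable f} := ⟨⟨fun _ => true, measurable_const⟩⟩
  refine le_ciInf fun φ => ?_
  obtain ⟨θ, hθ, hr⟩ := h {x | φ.1 x = false} (φ.2 (measurableSet_singleton false))
  have hcompl : {x | φ.1 x = false}ᶜ = {x | φ.1 x = true} := by ext; simp
  have hbdd : BddAbove (Set.range fun θ => ⨆ _ : θ ∈ T, (P θ {x | φ.1 x = false}).toReal) :=
    ⟨1, Set.forall_mem_range.2 fun _ => Real.iSup_le (fun _ => measureReal_le_one) zero_le_one⟩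
  have hsup : (P θ {x | φ.1 x = false}).toReal
      ≤ ⨆ θ ∈ T, (P θ {x | φ.1 x = false}).toReal :=
    le_ciSup_of_le hbdd θ
      (le_ciSup (f := fun _ : θ ∈ T => (P θ {x | φ.1 x = false}).toReal)
        (Set.finite_range _).bddAbove hθ)
  calc r ≤ (P 0 {x | φ.1 x = true}).toReal + (P θ {x | φ.1 x = false}).toReal := hcompl ▸ hr
    _ ≤ _ := add_le_add le_rfl hsup

end minimaxRisk

section RankOne

variable {p : ℕ} {v : Fin p → ℝ}

lemma gaussianPi_vecMulVec_self_apply (hv : v ≠ 0) (θ : Fin p → ℝ) {E : Set (Fin p → ℝ)}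
    (hE : MeasurableSet E) :
    gaussianPi θ (vecMulVec v v) E = gaussianReal 0 1 {t | θ + t • v ∈ E} := by
  rw [gaussianPi_vecMulVec_self θ hv, Measure.map_apply (by fun_prop) hE]
  rfl

lemma isProbabilityMeasure_gaussianPi_vecMulVec_self (hv : v ≠ 0) (θ : Fin p → ℝ) :
    IsProbabilityMeasure (gaussianPi θ (vecMulVec v v)) := by
  rw [gaussianPi_vecMulVec_self θ hv]
  exact Measure.isProbabilityMeasure_map (by fun_prop)

theorem minimaxRisk_gaussianPi_vecMulVec_self_eq_zero {s : ℕ} (hs : s < sparsity v) {ε : ℝ}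
    (hε : 0 < ε) :
    minimaxRisk (fun θ => gaussianPi θ (vecMulVec v v)) {θ | ε ≤ l2norm θ ∧ sparsity θ ≤ s}
      = 0 := by
  have hv : v ≠ 0 := by rintro rfl; simp [sparsity] at hs
  set L : Submodule ℝ (Fin p → ℝ) := ℝ ∙ v
  have hL : MeasurableSet (L : Set (Fin p → ℝ)) := L.closed_of_finiteDimensional.measurableSet
  have hsmul (t : ℝ) : t • v ∈ L := L.smul_mem t (Submodule.mem_span_singleton_self v)
  have hline (θ : Fin p → ℝ) (t : ℝ) : θ + t • v ∈ L ↔ θ ∈ L := L.add_mem_iff_left (hsmul t)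
  refine le_antisymm ?_ minimaxRisk_nonneg
  have hrisk := minimaxRisk_le_of_acceptanceRegion (P := fun θ => gaussianPi θ (vecMulVec v v))
    (T := {θ | ε ≤ l2norm θ ∧ sparsity θ ≤ s}) hL (α := 0) le_rfl ?_ ?_
  · simpa using hrisk
  · rw [gaussianPi_vecMulVec_self_apply hv 0 hL.compl]
    simp [hsmul]
  · rintro θ ⟨hεθ, hsθ⟩
    have hθ : θ ∉ L := by
      intro h
      obtain ⟨c, rfl⟩ := Submodule.mem_span_singleton.1 h
      rcases eq_or_ne c 0 with rfl | hc
      · simp [l2norm] at hεθ; linarith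
      · rw [sparsity_smul hc] at hsθ; omega
    rw [gaussianPi_vecMulVec_self_apply hv θ hL]
    simp [hline, hθ]

theorem minimaxRisk_gaussianPi_vecMulVec_self_le (hv : v ≠ 0) {M C δ : ℝ} (hMC : M < C / 2)
    (hδ : 0 ≤ δ) (hM : gaussianReal 0 1 {t | M < |t|} ≤ ENNReal.ofReal δ)
    {T : Set (Fin p → ℝ)} (hT : ∀ θ ∈ T, C * l2norm v ≤ l2norm θ) :
    minimaxRisk (fun θ => gaussianPi θ (vecMulVec v v)) T ≤ δ + δ := by
  set K := (· • v) '' Set.Icc (-(C / 2)) (C / 2)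
  have hK : MeasurableSet K := (isCompact_Icc.image (by fun_prop)).isClosed.measurableSet
  have hv' : 0 < l2norm v := by rw [l2norm_eq_norm]; simpa using hv
  refine minimaxRisk_le_of_acceptanceRegion hK hδ ?_ fun θ hθ => ?_
  · rw [gaussianPi_vecMulVec_self_apply hv 0 hK.compl]
    refine ENNReal.toReal_le_of_le_ofReal hδ ((measure_mono fun t ht => ?_).trans hM)
    by_contra hMt
    exact ht ⟨t, abs_le.1 ((not_lt.1 hMt).trans hMC.le), (zero_add _).symm⟩
  · rw [gaussianPi_vecMulVec_self_apply hv θ hK]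
    refine ENNReal.toReal_le_of_le_ofReal hδ ((measure_mono ?_).trans hM)
    rintro t ⟨r, hr, hrt⟩
    have hθr : θ = (r - t) • v := by
      rw [sub_smul, show r • v = θ + t • v from hrt, add_sub_cancel_right]
    have hCrt : C ≤ |r - t| := by
      have := hT θ hθ
      rw [hθr, l2norm_smul] at this
      exact le_of_mul_le_mul_right this hv'
    show M < |t|
    linarith [abs_le.2 hr, abs_sub r t]

theorem one_sub_le_minimaxRisk_gaussianPi_vecMulVec_self (hv : v ≠ 0) {c : ℝ} (hc : 0 ≤ c)
    {T : Set (Fin p → ℝ)} (hT : c • v ∈ T) :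
    1 - c ≤ minimaxRisk (fun θ => gaussianPi θ (vecMulVec v v)) T := by
  refine le_minimaxRisk (isProbabilityMeasure_gaussianPi_vecMulVec_self hv) fun K hK =>
    ⟨c • v, hT, ?_⟩
  set B := {t : ℝ | t • v ∈ K}
  have hB : MeasurableSet B := hK.preimage (by fun_prop)
  have hshift : {t : ℝ | c • v + t • v ∈ K} = (· + c) ⁻¹' B := by
    ext t; simp [B, ← add_smul, add_comm]
  have hcompare : (gaussianReal 0 1).real B
      ≤ (gaussianReal 0 1).real {t | c • v + t • v ∈ K} + c := by
    have h := gaussianReal_le_gaussianReal_add hc B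
    rw [← zero_add c, ← gaussianReal_map_add_const, Measure.map_apply (by fun_prop) hB, ← hshift,
      zero_add] at h
    have h' := ENNReal.toReal_mono (by finiteness) h
    rwa [ENNReal.toReal_add (measure_ne_top _ _) ENNReal.ofReal_ne_top,
      ENNReal.toReal_ofReal hc] at h'
  have hcompl : {t : ℝ | 0 + t • v ∈ Kᶜ} = Bᶜ := by ext; simp [B]
  rw [gaussianPi_vecMulVec_self_apply hv 0 hK.compl, gaussianPi_vecMulVec_self_apply hv _ hK,
    hcompl, ← measureReal_def, ← measureReal_def, probReal_compl_eq_one_sub hB]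
  linarith

end RankOne

theorem rank_one_perfect_correlation_rate_general
    (p s : ℕ) (hp : 1 ≤ p)
    (v : Fin p → ℝ) (hv : l2norm v = Real.sqrt p) :
    (let P : (Fin p → ℝ) → Measure (Fin p → ℝ) := fun θ =>
      gaussianPi θ (vecMulVec v v)
    let R : ℝ → ℝ := fun ε => minimaxRisk P
      {θ | ε ≤ l2norm θ ∧ sparsity θ ≤ s}
    (s < sparsity v → ∀ ε : ℝ, 0 < ε → R ε = 0) ∧
      (sparsity v ≤ s →
        ∀ η : ℝ, 0 < η → η < 1 → ∃ Cη cη : ℝ, 0 < Cη ∧ 0 < cη ∧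
          (∀ C : ℝ, Cη < C → R (C * Real.sqrt p) ≤ η) ∧
          (∀ c : ℝ, 0 < c → c < cη → 1 - η ≤ R (c * Real.sqrt p)))) := by
  have hv0 : v ≠ 0 := by
    rintro rfl
    have : (0 : ℝ) < Real.sqrt p := Real.sqrt_pos.2 (by exact_mod_cast hp)
    simp [l2norm] at hv
    linarith
  refine ⟨fun hs ε hε => minimaxRisk_gaussianPi_vecMulVec_self_eq_zero hs hε,
    fun hs η hη _ => ?_⟩
  obtain ⟨M, hM⟩ := exists_measure_abs_gt_le (gaussianReal 0 1)
    (ENNReal.ofReal_pos.2 (half_pos hη))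
  refine ⟨2 * max M 1, η, by positivity, hη, fun C hC => ?_, fun c hc hcη => ?_⟩
  · rw [← hv, ← add_halves η]
    exact minimaxRisk_gaussianPi_vecMulVec_self_le hv0 (by linarith [le_max_left M 1])
      (half_pos hη).le hM fun θ hθ => hθ.1
  · rw [← hv]
    refine le_trans (by linarith) (one_sub_le_minimaxRisk_gaussianPi_vecMulVec_self hv0 hc.le ?_)
    exact ⟨by rw [l2norm_smul, abs_of_pos hc], by rwa [sparsity_smul hc.ne']⟩

theorem rank_one_perfect_correlation_rate
    (p s : ℕ) (hp : 1 ≤ p) (hs1 : 1 ≤ s) (hs2 : s ≤ p)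
    (v : Fin p → ℝ) (hv : l2norm v = Real.sqrt p) :
    (let P : (Fin p → ℝ) → Measure (Fin p → ℝ) := fun θ =>
      gaussianPi θ (vecMulVec v v)
    let R : ℝ → ℝ := fun ε => minimaxRisk P
      {θ | ε ≤ l2norm θ ∧ sparsity θ ≤ s}
    (s < sparsity v → ∀ ε : ℝ, 0 < ε → R ε = 0) ∧
      (sparsity v ≤ s →
        ∀ η : ℝ, 0 < η → η < 1 → ∃ Cη cη : ℝ, 0 < Cη ∧ 0 < cη ∧
          (∀ C : ℝ, Cη < C → R (C * Real.sqrt p) ≤ η) ∧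
          (∀ c : ℝ, 0 < c → c < cη → 1 - η ≤ R (c * Real.sqrt p)))) :=
  rank_one_perfect_correlation_rate_general p s hp v hv
end
end
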